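/- If T₁, …, T_n are trees with at least one edge, none isomorphic to K₂, then pmd(T₁ □ ⋯ □ T_n □ K₂) = Δ(T₁) + ⋯ + Δ(T_n) + 1. -/

import Mathlib

/-!
Every part of a positive matching decomposition is a matching, so the `Δ(T₁) + ⋯ + Δ(Tₙ) + 1`
edges at a vertex of maximum degree lie in distinct parts.

For the upper bound, grade each tree by the distance to a root and `K₂` by its two vertices, and
colour the edges of `Tᵢ` properly with `ZMod Δ(Tᵢ)` by the potential of the endpoint farther from
the root. An edge of the product in direction `i` goes into part `(i, c)`, where `c` is its colour
plus the level of its endpoints in the other factors. Part `(i, c)` is a positive matching of the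
whole product for the weights `±(depth in Tᵢ + 1)`, with sign `+` where potential plus level is `c`:
along an edge in direction `i` the deeper endpoint dominates and decides the sign, while along any
other edge the level changes by one, so at most one endpoint is positive. The `K₂`-edges left over
form a perfect matching and come last.
-/

open SimpleGraph

variable {V : Type*}

/-- A positive matching in a simple graph: a set `M` of pairwise disjoint edges of `G` together
with a vertex weighting `w` such that an edge `uv` of `G` satisfies `w u + w v > 0` iff the edge
belongs to `M`. -/
def IsPositiveMatching (G : SimpleGraph V) (M : Set (Sym2 V)) : Prop :=
  M ⊆ G.edgeSet ∧
  (∀ e ∈ M, ∀ f ∈ M, e ≠ f → ∀ v : V, v ∈ e → v ∉ f) ∧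
  ∃ w : V → ℝ, ∀ u v : V, G.Adj u v → (0 < w u + w v ↔ s(u, v) ∈ M)

/-- A positive matching decomposition of `G` with parts `E 0, …, E (p-1)`: an ordered partition
of the edge set of `G` such that each part is a positive matching of `G` minus the earlier
parts. -/
def IsPMD (G : SimpleGraph V) {p : ℕ} (E : Fin p → Set (Sym2 V)) : Prop :=
  (∀ i j : Fin p, i ≠ j → Disjoint (E i) (E j)) ∧
  (⋃ i, E i) = G.edgeSet ∧
  ∀ i : Fin p, IsPositiveMatching (G.deleteEdges (⋃ j : Fin p, ⋃ (_ : j < i), E j)) (E i)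

/-- The minimum number of parts in a positive matching decomposition of `G`. -/
noncomputable def pmd (G : SimpleGraph V) : ℕ :=
  sInf {p : ℕ | ∃ E : Fin p → Set (Sym2 V), IsPMD G E}

/-- Box (Cartesian) product of a family of graphs. -/
def boxProdPi {ι : Type*} {W : ι → Type*} (G : ∀ i, SimpleGraph (W i)) :
    SimpleGraph (∀ i, W i) where
  Adj a b := ∃ i, (G i).Adj (a i) (b i) ∧ ∀ j, j ≠ i → a j = b j
  symm := ⟨fun _ _ ⟨i, h, hj⟩ => ⟨i, h.symm, fun j hji => (hj j hji).symm⟩⟩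
  loopless := ⟨fun a ⟨i, h, _⟩ => (G i).irrefl h⟩

section PositiveMatching

variable {G G' : SimpleGraph V} {M : Set (Sym2 V)}

lemma IsPositiveMatching.mono (h : IsPositiveMatching G M) (hle : G' ≤ G)
    (hM : M ⊆ G'.edgeSet) : IsPositiveMatching G' M := by
  obtain ⟨-, hdisj, w, hw⟩ := h
  exact ⟨hM, hdisj, w, fun u v huv => hw u v (hle huv)⟩

lemma isPositiveMatching_edgeSet
    (h : ∀ e ∈ G.edgeSet, ∀ f ∈ G.edgeSet, e ≠ f → ∀ v : V, v ∈ e → v ∉ f) :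
    IsPositiveMatching G G.edgeSet :=
  ⟨subset_rfl, h, fun _ => 1, fun _ _ huv => iff_of_true (by norm_num) huv⟩

lemma IsPMD.degree_le {p : ℕ} {E : Fin p → Set (Sym2 V)} (h : IsPMD G E) (v : V)
    [Fintype (G.neighborSet v)] : G.degree v ≤ p := by
  have hpart (w : G.neighborSet v) : ∃ k, s(v, (w : V)) ∈ E k := by
    have hw : s(v, (w : V)) ∈ ⋃ k, E k := by rw [h.2.1]; exact w.2
    exact Set.mem_iUnion.1 hw
  choose k hk using hpart
  rw [← card_neighborSet_eq_degree]
  simpa using Fintype.card_le_of_injective k fun w w' hww' => by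
    by_contra hne
    refine (h.2.2 (k w)).2.1 _ (hk w) _ (hww' ▸ hk w') ?_ v (Sym2.mem_mk_left _ _)
      (Sym2.mem_mk_left _ _)
    exact fun he => hne (Subtype.ext (Sym2.congr_right.1 he))

lemma pmd_le {p : ℕ} {E : Fin p → Set (Sym2 V)} (h : IsPMD G E) : pmd G ≤ p :=
  Nat.sInf_le ⟨E, h⟩

lemma degree_le_pmd (h : ∃ p, ∃ E : Fin p → Set (Sym2 V), IsPMD G E) (v : V)
    [Fintype (G.neighborSet v)] : G.degree v ≤ pmd G := by
  obtain ⟨E, hE⟩ := Nat.sInf_mem h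
  exact hE.degree_le v

/-- Parts that are positive matchings of `G` itself may come in any order; the edges they leave
over come last, where every remaining edge may be given weight `1`. -/
theorem exists_isPMD_of_isPositiveMatching {ι : Type*} [Fintype ι] (E : ι → Set (Sym2 V))
    (hE : ∀ i, IsPositiveMatching G (E i)) (hdisj : Pairwise fun i j => Disjoint (E i) (E j))
    (hrest : ∀ e ∈ G.edgeSet \ ⋃ i, E i, ∀ f ∈ G.edgeSet \ ⋃ i, E i, e ≠ f →
      ∀ v : V, v ∈ e → v ∉ f) :
    ∃ F : Fin (Fintype.card ι + 1) → Set (Sym2 V), IsPMD G F := by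
  set σ := (Fintype.equivFin ι).symm
  set R := G.edgeSet \ ⋃ i, E i
  have hE_iUnion : (⋃ k, E (σ k)) = ⋃ i, E i := σ.surjective.iUnion_comp E
  have hR_disj (i : ι) : Disjoint R (E i) :=
    Set.disjoint_sdiff_left.mono_right (Set.subset_iUnion E i)
  refine ⟨Fin.snoc (fun k => E (σ k)) R, ?_, ?_, ?_⟩
  · intro k k' hkk'
    induction k using Fin.lastCases <;> induction k' using Fin.lastCases <;>
      simp only [Fin.snoc_last, Fin.snoc_castSucc] at hkk' ⊢
    · exact absurd rfl hkk'
    · exact hR_disj _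
    · exact (hR_disj _).symm
    · exact hdisj (σ.injective.ne fun h => hkk' (congrArg _ h))
  · rw [Set.iUnion_snoc, hE_iUnion]
    exact Set.union_sdiff_cancel (Set.iUnion_subset fun i => (hE i).1)
  · intro k
    induction k using Fin.lastCases with
    | last =>
      have hprev : (⋃ j, ⋃ (_ : j < Fin.last _),
          Fin.snoc (α := fun _ => Set (Sym2 V)) (fun k => E (σ k)) R j) = ⋃ i, E i := by
        ext e
        simp [Fin.exists_iff_castSucc, Fin.castSucc_lt_last, ← hE_iUnion]
      simp only [Fin.snoc_last, hprev]
      have h := isPositiveMatching_edgeSet (G := G.deleteEdges (⋃ i, E i))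
        (by rwa [edgeSet_deleteEdges])
      rwa [edgeSet_deleteEdges] at h
    | cast k =>
      simp only [Fin.snoc_castSucc]
      refine (hE (σ k)).mono (deleteEdges_le _) fun e he => ?_
      rw [edgeSet_deleteEdges]
      refine ⟨(hE _).1 he, ?_⟩
      simp only [Set.mem_iUnion, not_exists]
      intro j hj hej
      induction j using Fin.lastCases with
      | last => exact (Fin.castSucc_lt_last k).not_gt hj
      | cast j =>
        rw [Fin.snoc_castSucc] at hej
        have hjk : σ j ≠ σ k := σ.injective.ne (Fin.castSucc_lt_castSucc_iff.1 hj).ne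
        exact Set.disjoint_left.1 (hdisj hjk) hej he

end PositiveMatching

lemma Finset.exists_injOn_mapsTo {α β : Type*} [Nonempty β] {s : Finset α} {t : Finset β}
    (h : s.card ≤ t.card) : ∃ f : α → β, Set.InjOn f s ∧ Set.MapsTo f s t := by
  obtain ⟨f, hf, hinj⟩ := (s : Set α).toFinite.exists_injOn_of_encard_le (t := (t : Set β))
    (by simpa only [Set.encard_coe_eq_coe_finsetCard, Nat.cast_le] using h)
  exact ⟨f, hinj, hf⟩

namespace SimpleGraph

variable {W : Type*} {G : SimpleGraph W}

def IsGrading (G : SimpleGraph W) (lvl : W → ℕ) : Prop :=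
  ∀ ⦃a b⦄, G.Adj a b → lvl a = lvl b + 1 ∨ lvl b = lvl a + 1

lemma IsTree.isGrading_dist (hG : G.IsTree) (r : W) : G.IsGrading (G.dist r) :=
  fun _ _ h => hG.dist_eq_dist_add_one_of_adj r h

lemma IsAcyclic.eq_concat_or_eq_concat_of_adj (hG : G.IsAcyclic) {r u v : W} {p : G.Walk r u}
    {q : G.Walk r v} (hp : p.IsPath) (hq : q.IsPath) (h : G.Adj u v) :
    q = p.concat h ∨ p = q.concat h.symm := by
  by_cases hu : u ∈ q.support
  · exact .inl (hG.path_concat hp hq h hu)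
  by_cases hv : v ∈ p.support
  · exact .inr (hG.path_concat hq hp h.symm hv)
  exact absurd (hG.mem_support_of_ne_mem_support_of_adj_of_isPath hq hp h.symm hv) hu

lemma IsAcyclic.eq_concat_of_length_eq_add_one (hG : G.IsAcyclic) {r u v : W} {p : G.Walk r u}
    {q : G.Walk r v} (hp : p.IsPath) (hq : q.IsPath) (h : G.Adj u v)
    (hlen : q.length = p.length + 1) : q = p.concat h := by
  refine (hG.eq_concat_or_eq_concat_of_adj hp hq h).resolve_right fun hpq => ?_
  have := congrArg Walk.length hpq
  rw [Walk.length_concat] at this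
  omega

lemma Connected.exists_adj_dist_lt (hG : G.Connected) {r u : W} (hu : u ≠ r) :
    ∃ p, G.Adj p u ∧ G.dist r p < G.dist r u := by
  obtain ⟨q, hq⟩ := hG.exists_walk_length_eq_dist u r
  cases q with
  | nil => exact absurd rfl hu
  | cons h q =>
    refine ⟨_, h.symm, ?_⟩
    calc G.dist r _ = G.dist _ r := dist_comm
      _ ≤ q.length := G.dist_le q
      _ < (Walk.cons h q).length := Nat.lt_succ_self _
      _ = G.dist r u := hq.trans dist_comm

lemma Connected.card_children_le [Fintype W] [DecidableRel G.Adj] (hG : G.Connected) {r u : W}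
    (hu : u ≠ r) :
    ((G.neighborFinset u).filter fun v => G.dist r v = G.dist r u + 1).card ≤ G.degree u - 1 := by
  classical
  obtain ⟨p, hpu, hp⟩ := hG.exists_adj_dist_lt hu
  have hsub : (G.neighborFinset u).filter (fun v => G.dist r v = G.dist r u + 1) ⊆
      (G.neighborFinset u).erase p := fun v hv => by
    rw [Finset.mem_filter] at hv
    exact Finset.mem_erase.2 ⟨by rintro rfl; omega, hv.1⟩
  rw [← card_neighborFinset_eq_degree,
    ← Finset.card_erase_of_mem ((mem_neighborFinset _ _ _).2 hpu.symm)]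
  exact Finset.card_le_card hsub

lemma IsTree.one_lt_maxDegree [Fintype W] [DecidableRel G.Adj] (hG : G.IsTree)
    (hedge : G.edgeSet.Nonempty) (hK2 : ¬ Nonempty (G ≃g (⊤ : SimpleGraph (Fin 2)))) :
    1 < G.maxDegree := by
  classical
  by_contra! h
  obtain ⟨e, he⟩ := hedge
  induction e using Sym2.ind with | _ u v => ?_
  have huv : G.Adj u v := he
  -- `2 (|W| - 1) = ∑ deg ≤ |W|`
  have hcard : Fintype.card W = 2 := by
    have hedges := hG.card_edgeFinset
    have hsum := G.sum_degrees_eq_twice_card_edges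
    have hdeg : ∑ w, G.degree w ≤ Fintype.card W :=
      calc ∑ w, G.degree w ≤ ∑ _w : W, 1 :=
            Finset.sum_le_sum fun w _ => (G.degree_le_maxDegree w).trans h
        _ = Fintype.card W := by simp
    have htwo : 1 < Fintype.card W := Fintype.one_lt_card_iff.2 ⟨u, v, huv.ne⟩
    omega
  have hall (w : W) : w = u ∨ w = v := by
    by_contra! hw
    have : ({u, v, w} : Finset W).card = 3 := by
      rw [Finset.card_insert_of_notMem (by simp [huv.ne, hw.1.symm]),
        Finset.card_pair hw.2.symm]
    have := Finset.card_le_univ ({u, v, w} : Finset W)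
    omega
  have htop : G = ⊤ := by
    ext a b
    refine ⟨Adj.ne, fun hab => ?_⟩
    rcases hall a with rfl | rfl <;> rcases hall b with rfl | rfl
    exacts [absurd rfl hab, huv, huv.symm, absurd rfl hab]
  subst htop
  exact hK2 ⟨Iso.completeGraph (Fintype.equivFinOfCardEq hcard)⟩

end SimpleGraph

section Coloring

variable {W : Type*} {G : SimpleGraph W} {D : ℕ}

/-- A proper edge colouring by `ZMod D` with weights witnessing, for every shift `s`, that the
edges of colour `c - s` form a positive matching. -/
structure CyclicPositiveColoring (G : SimpleGraph W) (D : ℕ) where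
  col : W → W → ZMod D
  wt : ZMod D → W → ZMod D → ℝ
  col_comm : ∀ ⦃a b⦄, G.Adj a b → col a b = col b a
  col_inj : ∀ ⦃a b b'⦄, G.Adj a b → G.Adj a b' → col a b = col a b' → b = b'
  wt_add_pos_iff : ∀ c s ⦃a b⦄, G.Adj a b → (0 < wt c a s + wt c b s ↔ col a b + s = c)
  wt_add_wt_add_one_nonpos : ∀ c a s, wt c a s + wt c a (s + 1) ≤ 0

def upperColor {α : Type*} (lvl : W → ℕ) (pot : W → α) (a b : W) : α :=
  if lvl a < lvl b then pot b else pot a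

def gradedWeight (lvl : W → ℕ) (pot : W → ZMod D) (c : ZMod D) (a : W) (s : ZMod D) : ℝ :=
  if pot a + s = c then lvl a + 1 else -(lvl a + 1)

variable {lvl : W → ℕ}

lemma upperColor_of_lt {α : Type*} {pot : W → α} {a b : W} (h : lvl a < lvl b) :
    upperColor lvl pot a b = pot b := if_pos h

lemma upperColor_of_not_lt {α : Type*} {pot : W → α} {a b : W} (h : ¬ lvl a < lvl b) :
    upperColor lvl pot a b = pot a := if_neg h

variable {pot : W → ZMod D}

/-- The upper endpoint decides: its weight is the larger one in absolute value. -/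
lemma gradedWeight_add_pos_iff {a b : W} (h : lvl b = lvl a + 1) (c s : ZMod D) :
    0 < gradedWeight lvl pot c a s + gradedWeight lvl pot c b s ↔ pot b + s = c := by
  unfold gradedWeight
  rw [h]
  push_cast
  have hl : (0 : ℝ) ≤ lvl a := Nat.cast_nonneg _
  split_ifs with ha hb hb
  · exact iff_of_true (by linarith) hb
  · exact iff_of_false (by linarith) hb
  · exact iff_of_true (by linarith) hb
  · exact iff_of_false (by linarith) hb

lemma gradedWeight_add_gradedWeight_add_one_nonpos (hD : (1 : ZMod D) ≠ 0) (c : ZMod D) (a : W)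
    (s : ZMod D) : gradedWeight lvl pot c a s + gradedWeight lvl pot c a (s + 1) ≤ 0 := by
  unfold gradedWeight
  have hl : (0 : ℝ) ≤ lvl a := Nat.cast_nonneg _
  split_ifs with h₁ h₂ h₂
  · exact absurd (by linear_combination h₂ - h₁) hD
  all_goals linarith

def CyclicPositiveColoring.ofGrading (hlvl : G.IsGrading lvl)
    (hpot : ∀ ⦃a b b'⦄, G.Adj a b → G.Adj a b' →
      upperColor lvl pot a b = upperColor lvl pot a b' → b = b')
    (hD : (1 : ZMod D) ≠ 0) : CyclicPositiveColoring G D where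
  col := upperColor lvl pot
  wt := gradedWeight lvl pot
  col_comm a b h := by
    rcases hlvl h with h | h
    · rw [upperColor_of_not_lt (by omega), upperColor_of_lt (by omega)]
    · rw [upperColor_of_lt (by omega), upperColor_of_not_lt (by omega)]
  col_inj := hpot
  wt_add_pos_iff c s a b h := by
    rcases hlvl h with h | h
    · rw [upperColor_of_not_lt (by omega), add_comm]
      exact gradedWeight_add_pos_iff h c s
    · rw [upperColor_of_lt (by omega)]
      exact gradedWeight_add_pos_iff h c s
  wt_add_wt_add_one_nonpos := gradedWeight_add_gradedWeight_add_one_nonpos hD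

end Coloring

namespace SimpleGraph

variable {W : Type*} {G : SimpleGraph W}

/-- `pot v` sums, along the path from `r` to `v`, labels that tell apart the children of each
vertex and are nonzero below the root; so two child edges at `a` differ by their labels, and a
child edge differs from the parent edge of `a` by a nonzero label. -/
theorem IsTree.exists_upperColor_injective [Fintype W] [DecidableRel G.Adj] (hG : G.IsTree)
    (r : W) {D : ℕ} [NeZero D] (hdeg : ∀ v, G.degree v ≤ D) :
    ∃ pot : W → ZMod D, ∀ ⦃a b b'⦄, G.Adj a b → G.Adj a b' →
      upperColor (G.dist r) pot a b = upperColor (G.dist r) pot a b' → b = b' := by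
  classical
  choose P hP hPlen using hG.connected.exists_path_of_dist r
  have hP_child {u v : W} (h : G.Adj u v) (hd : G.dist r v = G.dist r u + 1) :
      P v = (P u).concat h :=
    hG.isAcyclic.eq_concat_of_length_eq_add_one (hP u) (hP v) h (by rw [hPlen, hPlen, hd])
  let children (u : W) := (G.neighborFinset u).filter fun v => G.dist r v = G.dist r u + 1
  let labels (u : W) : Finset (ZMod D) := if u = r then .univ else Finset.univ.erase 0
  have hcard (u : W) : (children u).card ≤ (labels u).card := by
    by_cases hu : u = r
    · simp only [labels, hu, if_true, Finset.card_univ, ZMod.card]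
      exact (Finset.card_filter_le _ _).trans (hdeg r)
    · simp only [labels, hu, if_false, Finset.card_erase_of_mem (Finset.mem_univ _),
        Finset.card_univ, ZMod.card]
      exact (hG.connected.card_children_le hu).trans (Nat.sub_le_sub_right (hdeg u) 1)
  choose L hL_inj hL_mem using fun u => Finset.exists_injOn_mapsTo (hcard u)
  let pot (v : W) : ZMod D := ((P v).darts.map fun d => L d.fst d.snd).sum
  have hpot_child {u v : W} (h : G.Adj u v) (hd : G.dist r v = G.dist r u + 1) :
      pot v = pot u + L u v := by
    simp only [pot, hP_child h hd, Walk.darts_concat, List.concat_eq_append, List.map_append,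
      List.sum_append, List.map_cons, List.map_nil, List.sum_cons, List.sum_nil, add_zero]
  have hmem_children {u v : W} (h : G.Adj u v) (hd : G.dist r v = G.dist r u + 1) :
      v ∈ children u := Finset.mem_filter.2 ⟨(mem_neighborFinset _ _ _).2 h, hd⟩
  have hL_ne {u v : W} (h : G.Adj u v) (hd : G.dist r v = G.dist r u + 1) (hu : u ≠ r) :
      L u v ≠ 0 := by
    simpa [labels, hu] using hL_mem u (hmem_children h hd)
  refine ⟨pot, fun a b b' hb hb' hcol => ?_⟩
  rcases hG.dist_eq_dist_add_one_of_adj r hb with hab | hab <;>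
    rcases hG.dist_eq_dist_add_one_of_adj r hb' with hab' | hab'
  · obtain ⟨rfl, -⟩ := Walk.concat_inj ((hP_child hb.symm hab).symm.trans (hP_child hb'.symm hab'))
    rfl
  · rw [upperColor_of_not_lt (by omega), upperColor_of_lt (by omega), hpot_child hb' hab'] at hcol
    exact absurd (by simpa using hcol.symm) (hL_ne hb' hab' (by rintro rfl; simp at hab))
  · rw [upperColor_of_lt (by omega), upperColor_of_not_lt (by omega), hpot_child hb hab] at hcol
    exact absurd (by simpa using hcol) (hL_ne hb hab (by rintro rfl; simp at hab'))
  · rw [upperColor_of_lt (by omega), upperColor_of_lt (by omega), hpot_child hb hab,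
      hpot_child hb' hab', add_right_inj] at hcol
    exact hL_inj a (hmem_children hb hab) (hmem_children hb' hab') hcol

theorem IsTree.nonempty_cyclicPositiveColoring [Fintype W] [DecidableRel G.Adj] (hG : G.IsTree)
    {D : ℕ} (hD : 1 < D) (hdeg : ∀ v, G.degree v ≤ D) :
    Nonempty (CyclicPositiveColoring G D) := by
  have : NeZero D := ⟨by omega⟩
  have : Nontrivial (ZMod D) := ZMod.nontrivial_iff.2 (by omega)
  obtain ⟨r⟩ := hG.connected.nonempty
  obtain ⟨pot, hpot⟩ := hG.exists_upperColor_injective r hdeg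
  exact ⟨.ofGrading (hG.isGrading_dist r) hpot one_ne_zero⟩

end SimpleGraph

namespace CyclicPositiveColoring

variable {X W : Type*} {G : SimpleGraph W} {D : ℕ} (C : CyclicPositiveColoring G D)

def layer (H : SimpleGraph X) (π : X → W) (ℓ : X → ZMod D) (c : ZMod D) : Set (Sym2 X) :=
  {e | ∃ x y, H.Adj x y ∧ G.Adj (π x) (π y) ∧ C.col (π x) (π y) + ℓ x = c ∧ s(x, y) = e}

variable {C} {H : SimpleGraph X} {π : X → W} {ℓ : X → ZMod D}

lemma mem_layer_iff (hsplit : ∀ ⦃x y⦄, H.Adj x y →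
      (G.Adj (π x) (π y) ∧ ℓ y = ℓ x) ∨ (π y = π x ∧ (ℓ y = ℓ x + 1 ∨ ℓ x = ℓ y + 1)))
    {x y : X} (h : H.Adj x y) {c : ZMod D} :
    s(x, y) ∈ C.layer H π ℓ c ↔ G.Adj (π x) (π y) ∧ C.col (π x) (π y) + ℓ x = c := by
  refine ⟨?_, fun ⟨hG, hc⟩ => ⟨x, y, h, hG, hc, rfl⟩⟩
  rintro ⟨x', y', h', hG, hc, he⟩
  rcases Sym2.eq_iff.1 he with ⟨rfl, rfl⟩ | ⟨rfl, rfl⟩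
  · exact ⟨hG, hc⟩
  · obtain ⟨-, hℓ⟩ := (hsplit h').resolve_right fun ⟨hπ, _⟩ => hG.ne hπ.symm
    exact ⟨hG.symm, by rwa [← C.col_comm hG, hℓ]⟩

lemma isPositiveMatching_layer (hsplit : ∀ ⦃x y⦄, H.Adj x y →
      (G.Adj (π x) (π y) ∧ ℓ y = ℓ x) ∨ (π y = π x ∧ (ℓ y = ℓ x + 1 ∨ ℓ x = ℓ y + 1)))
    (hlift : ∀ ⦃x y y'⦄, H.Adj x y → H.Adj x y' → G.Adj (π x) (π y) → π y = π y' → y = y')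
    (c : ZMod D) : IsPositiveMatching H (C.layer H π ℓ c) := by
  have hsub : C.layer H π ℓ c ⊆ H.edgeSet := by
    rintro _ ⟨x, y, h, -, -, rfl⟩
    exact h
  refine ⟨hsub, ?_, fun z => C.wt c (π z) (ℓ z), fun x y h => ?_⟩
  · intro e he f hf hne v hve hvf
    obtain ⟨a, rfl⟩ := Sym2.mem_iff_exists.1 hve
    obtain ⟨b, rfl⟩ := Sym2.mem_iff_exists.1 hvf
    have ha : H.Adj v a := hsub he
    have hb : H.Adj v b := hsub hf
    obtain ⟨hGa, hca⟩ := (mem_layer_iff hsplit ha).1 he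
    obtain ⟨hGb, hcb⟩ := (mem_layer_iff hsplit hb).1 hf
    have hπ : π a = π b := C.col_inj hGa hGb (add_right_cancel (hca.trans hcb.symm))
    exact hne (by rw [hlift ha hb hGa hπ])
  · dsimp only
    rw [mem_layer_iff hsplit h]
    rcases hsplit h with ⟨hG, hℓ⟩ | ⟨hπ, hℓ | hℓ⟩
    · rw [hℓ, C.wt_add_pos_iff c _ hG, and_iff_right hG]
    · refine iff_of_false ?_ fun ⟨hG, _⟩ => hG.ne hπ.symm
      rw [hπ, hℓ]
      exact (C.wt_add_wt_add_one_nonpos c (π x) (ℓ x)).not_gt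
    · refine iff_of_false ?_ fun ⟨hG, _⟩ => hG.ne hπ.symm
      rw [hπ, hℓ, add_comm]
      exact (C.wt_add_wt_add_one_nonpos c (π x) (ℓ y)).not_gt

end CyclicPositiveColoring

namespace SimpleGraph

variable {ι : Type*} {W : ι → Type*} {G : ∀ i, SimpleGraph (W i)} {x y : ∀ i, W i}

lemma boxProdPi_adj_of_ne (h : (boxProdPi G).Adj x y) {i : ι} (hi : x i ≠ y i) :
    (G i).Adj (x i) (y i) ∧ ∀ j, j ≠ i → x j = y j := by
  obtain ⟨k, hk, hrest⟩ := h
  obtain rfl : k = i := by_contra fun hki => hi (hrest i (Ne.symm hki))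
  exact ⟨hk, hrest⟩

lemma degree_boxProdPi [Fintype ι] [DecidableEq ι] (x : ∀ i, W i)
    [∀ i, Fintype ((G i).neighborSet (x i))] [Fintype ((boxProdPi G).neighborSet x)] :
    (boxProdPi G).degree x = ∑ i, (G i).degree (x i) := by
  let f (b : Σ i, (G i).neighborSet (x i)) : (boxProdPi G).neighborSet x :=
    ⟨Function.update x b.1 b.2, b.1, by rw [Function.update_self]; exact b.2.2,
      fun j hj => (Function.update_of_ne hj _ _).symm⟩
  have hf : Function.Bijective f := by
    constructor
    · rintro ⟨i, b, hb⟩ ⟨i', b', hb'⟩ h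
      have h := congrArg Subtype.val h
      obtain rfl : i = i' := by_contra fun hii' => by
        have := congrFun h i
        simp only [f, Function.update_self, Function.update_of_ne hii'] at this
        exact (G i).ne_of_adj hb this.symm
      obtain rfl : b = b' := by simpa [f] using congrFun h i
      rfl
    · rintro ⟨y, i, hi, hrest⟩
      refine ⟨⟨i, y i, hi⟩, Subtype.ext (funext fun j => ?_)⟩
      by_cases hj : j = i
      · subst hj; simp [f]
      · simp [f, Function.update_of_ne hj, hrest j hj]
  rw [← card_neighborSet_eq_degree, ← Fintype.card_of_bijective hf, Fintype.card_sigma]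
  simp only [card_neighborSet_eq_degree]

end SimpleGraph

section Prism

variable {ι : Type*} {W : ι → Type*} {T : ∀ i, SimpleGraph (W i)} {z z' : (∀ i, W i) × Fin 2}

lemma boxProdPi_boxProd_top_adj_of_ne (h : (boxProdPi T □ (⊤ : SimpleGraph (Fin 2))).Adj z z')
    {i : ι} (hi : z.1 i ≠ z'.1 i) :
    (T i).Adj (z.1 i) (z'.1 i) ∧ z.2 = z'.2 ∧ ∀ j, j ≠ i → z.1 j = z'.1 j := by
  rcases boxProd_adj.1 h with ⟨h, h₂⟩ | ⟨-, h₁⟩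
  · obtain ⟨hi, hj⟩ := boxProdPi_adj_of_ne h hi
    exact ⟨hi, h₂, hj⟩
  · exact absurd (congrFun h₁ i) hi

lemma boxProdPi_boxProd_top_eq_of_adj {i : ι} {y y' : (∀ i, W i) × Fin 2}
    (hy : (boxProdPi T □ (⊤ : SimpleGraph (Fin 2))).Adj z y)
    (hy' : (boxProdPi T □ (⊤ : SimpleGraph (Fin 2))).Adj z y') (hne : z.1 i ≠ y.1 i)
    (hi : y.1 i = y'.1 i) : y = y' := by
  obtain ⟨-, h₂, h₁⟩ := boxProdPi_boxProd_top_adj_of_ne hy hne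
  obtain ⟨-, h₂', h₁'⟩ := boxProdPi_boxProd_top_adj_of_ne hy' (hi ▸ hne)
  refine Prod.ext (funext fun j => ?_) (h₂.symm.trans h₂')
  by_cases hj : j = i
  · subst hj; exact hi
  · exact (h₁ j hj).symm.trans (h₁' j hj)

variable [Fintype ι] [DecidableEq ι]

def sideLevel (lvl : ∀ i, W i → ℕ) (D : ℕ) (i : ι) (z : (∀ j, W j) × Fin 2) : ZMod D :=
  (z.2.val : ZMod D) + ∑ j ∈ Finset.univ.erase i, (lvl j (z.1 j) : ZMod D)

variable {lvl : ∀ i, W i → ℕ} {D : ℕ} {i : ι}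

lemma sideLevel_eq (h₂ : z.2 = z'.2) (h₁ : ∀ j, j ≠ i → z.1 j = z'.1 j) :
    sideLevel lvl D i z = sideLevel lvl D i z' := by
  unfold sideLevel
  rw [h₂, Finset.sum_congr rfl fun j hj => by rw [h₁ j (Finset.ne_of_mem_erase hj)]]

lemma sideLevel_adj (hlvl : ∀ i, (T i).IsGrading (lvl i))
    (h : (boxProdPi T □ (⊤ : SimpleGraph (Fin 2))).Adj z z') (hi : z.1 i = z'.1 i) :
    sideLevel lvl D i z' = sideLevel lvl D i z + 1 ∨
      sideLevel lvl D i z = sideLevel lvl D i z' + 1 := by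
  unfold sideLevel
  rcases boxProd_adj.1 h with ⟨⟨k, hk, hrest⟩, h₂⟩ | ⟨h₂, h₁⟩
  · have hki : k ∈ Finset.univ.erase i :=
      Finset.mem_erase.2 ⟨fun hki => hk.ne (hki ▸ hi), Finset.mem_univ k⟩
    have htail : ∑ j ∈ (Finset.univ.erase i).erase k, (lvl j (z'.1 j) : ZMod D) =
        ∑ j ∈ (Finset.univ.erase i).erase k, (lvl j (z.1 j) : ZMod D) :=
      Finset.sum_congr rfl fun j hj => by rw [hrest j (Finset.ne_of_mem_erase hj)]
    rw [h₂, ← Finset.add_sum_erase _ _ hki, ← Finset.add_sum_erase _ _ hki, htail]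
    rcases hlvl k hk with e | e <;> rw [e] <;> push_cast
    · exact .inr (by ring)
    · exact .inl (by ring)
  · rw [h₁]
    rcases z with ⟨x, ε⟩
    rcases z' with ⟨x', δ⟩
    simp only [top_adj] at h₂
    fin_cases ε <;> fin_cases δ <;> simp_all [add_comm]

lemma sideLevel_split (hlvl : ∀ i, (T i).IsGrading (lvl i))
    (h : (boxProdPi T □ (⊤ : SimpleGraph (Fin 2))).Adj z z') :
    ((T i).Adj (z.1 i) (z'.1 i) ∧ sideLevel lvl D i z' = sideLevel lvl D i z) ∨
      (z'.1 i = z.1 i ∧ (sideLevel lvl D i z' = sideLevel lvl D i z + 1 ∨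
        sideLevel lvl D i z = sideLevel lvl D i z' + 1)) := by
  by_cases hi : z.1 i = z'.1 i
  · exact .inr ⟨hi.symm, sideLevel_adj hlvl h hi⟩
  · obtain ⟨hadj, h₂, h₁⟩ := boxProdPi_boxProd_top_adj_of_ne h hi
    exact .inl ⟨hadj, (sideLevel_eq h₂ h₁).symm⟩

end Prism

section PrismLayer

variable {ι : Type*} [Fintype ι] [DecidableEq ι] {W : ι → Type*} {T : ∀ i, SimpleGraph (W i)}
  {D : ι → ℕ} {C : ∀ i, CyclicPositiveColoring (T i) (D i)} {lvl : ∀ i, W i → ℕ}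
  {z z' : (∀ i, W i) × Fin 2}

variable (C lvl) in
def prismLayer (k : Σ i, ZMod (D i)) : Set (Sym2 ((∀ i, W i) × Fin 2)) :=
  (C k.1).layer (boxProdPi T □ ⊤) (fun z => z.1 k.1) (sideLevel lvl (D k.1) k.1) k.2

lemma mem_prismLayer_iff (hlvl : ∀ i, (T i).IsGrading (lvl i))
    (h : (boxProdPi T □ (⊤ : SimpleGraph (Fin 2))).Adj z z') (i : ι) (c : ZMod (D i)) :
    s(z, z') ∈ prismLayer C lvl ⟨i, c⟩ ↔
      (T i).Adj (z.1 i) (z'.1 i) ∧ (C i).col (z.1 i) (z'.1 i) + sideLevel lvl (D i) i z = c :=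
  (C i).mem_layer_iff (fun _ _ h => sideLevel_split hlvl h) h

lemma isPositiveMatching_prismLayer (hlvl : ∀ i, (T i).IsGrading (lvl i))
    (k : Σ i, ZMod (D i)) : IsPositiveMatching (boxProdPi T □ ⊤) (prismLayer C lvl k) :=
  (C k.1).isPositiveMatching_layer (fun _ _ h => sideLevel_split hlvl h)
    (fun _ _ _ hy hy' hadj => boxProdPi_boxProd_top_eq_of_adj hy hy' hadj.ne) k.2

lemma pairwise_disjoint_prismLayer (hlvl : ∀ i, (T i).IsGrading (lvl i)) :
    Pairwise fun k k' => Disjoint (prismLayer C lvl k) (prismLayer C lvl k') := by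
  rintro ⟨i, c⟩ ⟨i', c'⟩ hne
  refine Set.disjoint_left.2 ?_
  rintro _ ⟨z, z', h, hi, hc, rfl⟩ he'
  obtain ⟨hi', hc'⟩ := (mem_prismLayer_iff hlvl h i' c').1 he'
  obtain rfl : i' = i := by_contra fun hii' =>
    hi'.ne ((boxProdPi_boxProd_top_adj_of_ne h hi.ne).2.2 i' hii')
  obtain rfl : c = c' := hc.symm.trans hc'
  exact hne rfl

lemma fst_eq_of_notMem_prismLayer (hlvl : ∀ i, (T i).IsGrading (lvl i))
    (h : (boxProdPi T □ (⊤ : SimpleGraph (Fin 2))).Adj z z')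
    (hz : s(z, z') ∉ ⋃ k, prismLayer C lvl k) : z'.1 = z.1 := by
  funext i
  by_contra hi
  obtain ⟨hadj, -⟩ := boxProdPi_boxProd_top_adj_of_ne h (Ne.symm hi)
  exact hz (Set.mem_iUnion.2 ⟨⟨i, _⟩, (mem_prismLayer_iff hlvl h i _).2 ⟨hadj, rfl⟩⟩)

end PrismLayer

theorem exists_isPMD_boxProdPi_boxProd_top {ι : Type*} [Fintype ι] [DecidableEq ι]
    {W : ι → Type*} (T : ∀ i, SimpleGraph (W i)) (D : ι → ℕ) [∀ i, NeZero (D i)]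
    (C : ∀ i, CyclicPositiveColoring (T i) (D i)) (lvl : ∀ i, W i → ℕ)
    (hlvl : ∀ i, (T i).IsGrading (lvl i)) :
    ∃ F : Fin (∑ i, D i + 1) → Set (Sym2 ((∀ i, W i) × Fin 2)),
      IsPMD (boxProdPi T □ (⊤ : SimpleGraph (Fin 2))) F := by
  have hcard : Fintype.card (Σ i, ZMod (D i)) = ∑ i, D i := by simp [ZMod.card]
  rw [← hcard]
  refine exists_isPMD_of_isPositiveMatching (prismLayer C lvl) (isPositiveMatching_prismLayer hlvl)
    (pairwise_disjoint_prismLayer hlvl) ?_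
  rintro e ⟨he, hne⟩ f ⟨hf, hnf⟩ hef v hve hvf
  obtain ⟨a, rfl⟩ := Sym2.mem_iff_exists.1 hve
  obtain ⟨b, rfl⟩ := Sym2.mem_iff_exists.1 hvf
  have hva : (boxProdPi T □ (⊤ : SimpleGraph (Fin 2))).Adj v a := he
  have hvb : (boxProdPi T □ (⊤ : SimpleGraph (Fin 2))).Adj v b := hf
  have ha := fst_eq_of_notMem_prismLayer hlvl hva hne
  have hb := fst_eq_of_notMem_prismLayer hlvl hvb hnf
  have ha₂ : a.2 ≠ v.2 := fun h₂ => hva.ne (Prod.ext ha h₂).symm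
  have hb₂ : b.2 ≠ v.2 := fun h₂ => hvb.ne (Prod.ext hb h₂).symm
  obtain rfl : a = b := Prod.ext (ha.trans hb.symm) (by omega)
  exact hef rfl

theorem pmd_boxProd_trees_K2_general {n : ℕ} {W : Fin n → Type*} [∀ i, Fintype (W i)]
    (T : ∀ i, SimpleGraph (W i)) [∀ i, DecidableRel (T i).Adj]
    (htree : ∀ i, (T i).IsTree) (hedge : ∀ i, (T i).edgeSet.Nonempty)
    (hK2 : ∀ i, ¬ Nonempty ((T i) ≃g (⊤ : SimpleGraph (Fin 2)))) :
    pmd ((boxProdPi T) □ (⊤ : SimpleGraph (Fin 2))) = (∑ i, (T i).maxDegree) + 1 := by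
  classical
  have hD (i) : 1 < (T i).maxDegree := (htree i).one_lt_maxDegree (hedge i) (hK2 i)
  have hD₀ (i) : NeZero (T i).maxDegree := ⟨by have := hD i; omega⟩
  have hW (i) : Nonempty (W i) := (htree i).connected.nonempty
  have C (i) := ((htree i).nonempty_cyclicPositiveColoring (hD i) (T i).degree_le_maxDegree).some
  choose x hx using fun i => (T i).exists_maximal_degree_vertex
  obtain ⟨F, hF⟩ := exists_isPMD_boxProdPi_boxProd_top T _ C _
    fun i => (htree i).isGrading_dist (x i)
  refine le_antisymm (pmd_le hF) ?_
  calc ∑ i, (T i).maxDegree + 1 = (boxProdPi T □ (⊤ : SimpleGraph (Fin 2))).degree (x, 0) := by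
        rw [degree_boxProd, degree_boxProdPi]
        simp [hx]
    _ ≤ _ := degree_le_pmd ⟨_, F, hF⟩ _

/-- If `T₁, …, Tₙ` are trees with at least one edge, none isomorphic to `K₂`, then
`pmd(T₁ □ ⋯ □ Tₙ □ K₂) = Δ(T₁) + ⋯ + Δ(Tₙ) + 1`. -/
theorem pmd_boxProd_trees_K2 {n : ℕ} {W : Fin n → Type*} [∀ i, Fintype (W i)]
    [∀ i, DecidableEq (W i)] (T : ∀ i, SimpleGraph (W i)) [∀ i, DecidableRel (T i).Adj]
    (htree : ∀ i, (T i).IsTree) (hedge : ∀ i, (T i).edgeSet.Nonempty)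
    (hK2 : ∀ i, ¬ Nonempty ((T i) ≃g (⊤ : SimpleGraph (Fin 2)))) :
    pmd ((boxProdPi T) □ (⊤ : SimpleGraph (Fin 2))) = (∑ i, (T i).maxDegree) + 1 :=
  pmd_boxProd_trees_K2_general T htree hedge hK2
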